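/- Let w and m be positive natural numbers with 1 ≤ m ≤ 2^{w−1}, and suppose m does not divide 2^w. If J is uniformly distributed on {0, 1, …, 2^w − 1} and Y = 1 + ⌊m·J/2^w⌋, then the ratio (max_{1 ≤ k ≤ m} P(Y = k)) / (min_{1 ≤ k ≤ m} P(Y = k)) is at most 1 + m·2^{−w+1}. -/

import Mathlib

/-- The probability that the multiply-and-floor method outputs `k`, when `J` is uniformly
distributed on `{0, 1, …, 2^w − 1}` and `Y = 1 + ⌊m·J/2^w⌋`:
`P(Y = k) = #{j < 2^w | 1 + ⌊m·j/2^w⌋ = k} / 2^w`. -/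
def floorMulProb (w m k : ℕ) : ℚ :=
  (((Finset.range (2 ^ w)).filter (fun j => 1 + m * j / 2 ^ w = k)).card : ℚ) / 2 ^ w

/-!
The sample `j < 2^w` lands in bucket `t` exactly when `t·2^w ≤ m·j < (t+1)·2^w`, so bucket `t`
is the integer interval `[⌈t·2^w/m⌉, ⌈(t+1)·2^w/m⌉)`. A window of length `2^w` holds either
`q = ⌊2^w/m⌋` or `q + 1` multiples of `m`, so every probability lies in `[q/2^w, (q+1)/2^w]`
and the ratio is at most `1 + 1/q`. Finally `2^w < m(q+1) ≤ 2mq` because `q ≥ 1`.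
-/

open Finset

namespace Nat

variable {m : ℕ}

lemma add_mul_ceilDiv (hm : 0 < m) (a q : ℕ) : (a + m * q) ⌈/⌉ m = a ⌈/⌉ m + q := by
  rw [ceilDiv_eq_add_pred_div, ceilDiv_eq_add_pred_div, ← Nat.add_mul_div_right _ _ hm]
  congr 1
  rw [Nat.mul_comm m q]
  omega

lemma ceilDiv_mono (hm : 0 < m) : Monotone (· ⌈/⌉ m : ℕ → ℕ) := (gc_mul_ceilDiv hm).monotone_l

lemma lt_ceilDiv_iff_mul_lt (hm : 0 < m) {a j : ℕ} : j < a ⌈/⌉ m ↔ m * j < a := by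
  simpa using (ceilDiv_le_iff_le_mul hm (b := a) (c := j)).not

/-- Any window of `N` consecutive naturals contains `N / m` or `N / m + 1` multiples of `m`. -/
lemma div_le_add_ceilDiv_sub_ceilDiv (hm : 0 < m) (a N : ℕ) :
    N / m ≤ (a + N) ⌈/⌉ m - a ⌈/⌉ m := by
  have : (a + m * (N / m)) ⌈/⌉ m ≤ (a + N) ⌈/⌉ m :=
    ceilDiv_mono hm (Nat.add_le_add_left (Nat.mul_div_le N m) a)
  rw [add_mul_ceilDiv hm] at this
  exact Nat.le_sub_of_add_le' this

lemma add_ceilDiv_sub_ceilDiv_le (hm : 0 < m) (a N : ℕ) :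
    (a + N) ⌈/⌉ m - a ⌈/⌉ m ≤ N / m + 1 := by
  have : (a + N) ⌈/⌉ m ≤ (a + m * (N / m + 1)) ⌈/⌉ m :=
    ceilDiv_mono hm (Nat.add_le_add_left (Nat.lt_mul_div_succ N hm).le a)
  rw [add_mul_ceilDiv hm] at this
  exact Nat.sub_le_iff_le_add'.mpr this

end Nat

lemma filter_mul_div_eq_eq_Ico {N m t : ℕ} (hN : 0 < N) (hm : 0 < m) (ht : t < m) :
    {j ∈ range N | m * j / N = t} = Ico (t * N ⌈/⌉ m) ((t * N + N) ⌈/⌉ m) := by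
  ext j
  simp only [mem_filter, mem_range, mem_Ico, Nat.lt_ceilDiv_iff_mul_lt hm,
    ceilDiv_le_iff_le_mul hm, Nat.div_eq_iff hN]
  have hmN : t * N + N ≤ m * N := by rw [← Nat.succ_mul]; exact Nat.mul_le_mul_right N ht
  constructor
  · rintro ⟨-, h1, h2⟩
    omega
  · rintro ⟨h1, h2⟩
    exact ⟨Nat.lt_of_mul_lt_mul_left (h2.trans_le hmN), h1, by omega⟩

lemma floorMulProb_eq (w m : ℕ) {k : ℕ} (hk : k ≠ 0) :
    floorMulProb w m k = #{j ∈ range (2 ^ w) | m * j / 2 ^ w = k - 1} / 2 ^ w := by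
  unfold floorMulProb
  congr 3
  exact filter_congr fun j _ ↦ by omega

lemma floorMulProb_mem_Icc {w m k : ℕ} (hk : k ∈ Icc 1 m) :
    floorMulProb w m k ∈ Set.Icc ((2 ^ w / m : ℕ) / 2 ^ w : ℚ) ((2 ^ w / m + 1 : ℕ) / 2 ^ w) := by
  obtain ⟨hk1, hkm⟩ := mem_Icc.mp hk
  have hm : 0 < m := by omega
  rw [floorMulProb_eq w m (by omega), filter_mul_div_eq_eq_Ico (by positivity) hm (by omega),
    Nat.card_Ico]
  constructor <;> gcongr
  · exact Nat.div_le_add_ceilDiv_sub_ceilDiv hm _ _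
  · exact Nat.add_ceilDiv_sub_ceilDiv_le hm _ _

theorem floorMul_ratio_le_general (w m : ℕ) (hm1 : 1 ≤ m) (hm2 : m ≤ 2 ^ (w - 1)) :
    (Finset.Icc 1 m).sup' (Finset.nonempty_Icc.mpr hm1) (floorMulProb w m) /
        (Finset.Icc 1 m).inf' (Finset.nonempty_Icc.mpr hm1) (floorMulProb w m)
      ≤ 1 + (m : ℚ) * (2 : ℚ) ^ (-(w : ℤ) + 1) := by
  set q := 2 ^ w / m
  have hq : 0 < q := Nat.div_pos (hm2.trans (Nat.pow_le_pow_right two_pos (w.sub_le 1))) hm1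
  have hwq : 2 ^ w ≤ m * 2 * q := by
    have h1 : 2 ^ w < m * q + m := Nat.lt_mul_div_succ _ hm1
    have h2 : m ≤ m * q := Nat.le_mul_of_pos_right m hq
    linarith
  calc _ ≤ ((q + 1 : ℕ) / 2 ^ w : ℚ) / ((q : ℕ) / 2 ^ w) :=
        div_le_div₀ (by positivity) (sup'_le _ _ fun k hk ↦ (floorMulProb_mem_Icc hk).2)
          (by positivity) (le_inf' _ _ fun k hk ↦ (floorMulProb_mem_Icc hk).1)
    _ = 1 + 1 / q := by field_simp; push_cast; ring
    _ ≤ 1 + m * (2 / 2 ^ w) := by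
        gcongr
        rw [div_le_iff₀ (by positivity)]
        field_simp
        exact_mod_cast hwq
    _ = _ := by rw [zpow_add₀ two_ne_zero, zpow_neg, zpow_natCast, zpow_one]; ring

/-- if `1 ≤ m ≤ 2^{w−1}` and `m` does not divide `2^w`, then
`(max_{1 ≤ k ≤ m} P(Y = k)) / (min_{1 ≤ k ≤ m} P(Y = k)) ≤ 1 + m·2^{−w+1}`. -/
theorem floorMul_ratio_le (w m : ℕ) (hw : 0 < w) (hm1 : 1 ≤ m) (hm2 : m ≤ 2 ^ (w - 1))
    (hnd : ¬ m ∣ 2 ^ w) :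
    (Finset.Icc 1 m).sup' (Finset.nonempty_Icc.mpr hm1) (floorMulProb w m) /
        (Finset.Icc 1 m).inf' (Finset.nonempty_Icc.mpr hm1) (floorMulProb w m)
      ≤ 1 + (m : ℚ) * (2 : ℚ) ^ (-(w : ℤ) + 1) :=
  floorMul_ratio_le_general w m hm1 hm2
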